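/- arXiv:2602.16580 — 4 statements merged into one kernel-verified Lean document; each statement's English description precedes it below -/
import Mathlib

section
/- Fix an integer n ≥ 8 and suppose that the quadrics P_J, as J ranges over the 4-element subsets of {5,…,n}, form a regular sequence in the polynomial ring ℂ[ψ_{A,B}] in the level-2 variables. Then every polynomial f in the variables ψ₀, ψ_{A,B}, ψ_J that vanishes at every point p of ℂ^N with Q_J(p) = 0 for all J and p₀ ≠ 0 also vanishes at every point of the full common zero locus {p ∈ ℂ^N : Q_J(p) = 0 for all J}. (In other words, the zero locus of the homogenized quadrics Q_J has no irreducible component contained in the hyperplane {ψ₀ = 0}, so the projective truncation variety equals the naive homogenization V_Q.) -/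
open MvPolynomial

/-- Index type for the level-2 variables `ψ_{A,B}`: `A` is a 2-element subset of
`{1,2,3,4}` (encoded as `Fin 4`) and `B` a 2-element subset of `{5,…,n}` (encoded as `Fin (n-4)`). -/
abbrev Idx2 (m : ℕ) : Type :=
  {A : Finset (Fin 4) // A.card = 2} × {B : Finset (Fin m) // B.card = 2}

/-- Index type for the level-4 variables `ψ_J`: `J` a 4-element subset of `{5,…,n}`. -/
abbrev Idx4 (m : ℕ) : Type := {J : Finset (Fin m) // J.card = 4}

/-- The level-2 variable `ψ_{A,B}` (junk value `0` if the cardinality constraints fail). -/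
noncomputable def psi {m : ℕ} (A : Finset (Fin 4)) (B : Finset (Fin m)) :
    MvPolynomial (Idx2 m) ℂ :=
  if h : A.card = 2 ∧ B.card = 2 then X (⟨A, h.1⟩, ⟨B, h.2⟩) else 0

/-- The sign of the permutation of `J` listing the elements of `I` in increasing order
followed by those of `J \ I` in increasing order (computed via cross inversions). -/
def shuffleSign {m : ℕ} (J I : Finset (Fin m)) : ℤ :=
  (-1) ^ ((I ×ˢ (J \ I)).filter fun p => p.2 < p.1).card

/-- The quadric `P_J`, for `J` a 4-element subset of `{5,…,n}` (encoded in `Fin (n-4)`);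
the 2-element subsets `{1,2},{3,4},{1,3},{2,4},{1,4},{2,3}` of `{1,2,3,4}` are encoded as
`{0,1},{2,3},{0,2},{1,3},{0,3},{1,2} : Finset (Fin 4)`. -/
noncomputable def Pq {m : ℕ} (J : Finset (Fin m)) : MvPolynomial (Idx2 m) ℂ :=
  ∑ I ∈ J.powersetCard 2,
    (shuffleSign J I : MvPolynomial (Idx2 m) ℂ) *
      (psi {0,1} I * psi {2,3} (J \ I)
        - psi {0,2} I * psi {1,3} (J \ I)
        + psi {0,3} I * psi {1,2} (J \ I))

/-- Index type of the ambient ring: the level-0 variable `ψ₀`, the level-2 variables and the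
level-4 variables.  -/
abbrev IdxF (m : ℕ) : Type := Unit ⊕ Idx2 m ⊕ Idx4 m

/-- The homogenized quadric `Q_J = -ψ₀·ψ_J + P_J`. -/
noncomputable def Qq {m : ℕ} (J : Idx4 m) : MvPolynomial (IdxF m) ℂ :=
  - X (Sum.inl ()) * X (Sum.inr (Sum.inr J))
    + rename (fun i => Sum.inr (Sum.inl i)) (Pq J.val)

/-!
Because `ψ₀` is a nonzerodivisor modulo `I = (Q_J)_J`, the Nullstellensatz finishes the proof:
`ψ₀ f` vanishes on `V(I)`, so `(ψ₀ f)^k ∈ I` for some `k`, hence `f^k ∈ I` and `f` vanishes on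
`V(I)`.

To see that `ψ₀` is regular modulo `I`, note that setting `ψ₀ = 0` turns `Q_J` into `P_J`, and a
regular sequence of `ℂ[ψ_{A,B}]` stays regular in the polynomial ring over it in the `ψ_J`
(a flat extension). So `ψ₀, Q_{J₁}, …, Q_{J_s}` is weakly regular, and `ψ₀` can be moved past
the `Q_{J_i}` one at a time.
-/

open Ideal RingTheory.Sequence

section Regular

variable {R S : Type*} [CommRing R] [CommRing S]

lemma isSMulRegular_quotient_iff_mul_mem {I : Ideal R} {r : R} :
    IsSMulRegular (R ⧸ I) r ↔ ∀ g, r * g ∈ I → g ∈ I :=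
  isSMulRegular_quotient_iff_mem_of_smul_mem I r

lemma IsSMulRegular.quotient_bot {r : R} (h : IsSMulRegular R r) :
    IsSMulRegular (R ⧸ (⊥ : Ideal R)) r := by
  rw [isSMulRegular_quotient_iff_mul_mem]
  intro g hg
  rw [mem_bot] at hg ⊢
  exact h (by simpa using hg)

lemma IsSMulRegular.quotient_comap (f : R →+* S) {J : Ideal S} {r : R}
    (h : IsSMulRegular (S ⧸ J) (f r)) : IsSMulRegular (R ⧸ J.comap f) r := by
  rw [isSMulRegular_quotient_iff_mul_mem] at h ⊢
  intro g hg
  exact h (f g) (by simpa using hg)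

lemma IsSMulRegular.quotient_sup_span_singleton_swap {I : Ideal R} {x y : R}
    (hx : IsSMulRegular (R ⧸ I) x) (hy : IsSMulRegular (R ⧸ (I ⊔ span {x})) y) :
    IsSMulRegular (R ⧸ (I ⊔ span {y})) x := by
  rw [isSMulRegular_quotient_iff_mul_mem] at hx hy ⊢
  intro g hg
  obtain ⟨i, hi, z, hz, hxg⟩ := Submodule.mem_sup.mp hg
  obtain ⟨c, rfl⟩ := mem_span_singleton'.mp hz
  have hyc : y * c ∈ I ⊔ span {x} := Submodule.mem_sup.mpr
    ⟨-i, I.neg_mem hi, g * x, mem_span_singleton'.mpr ⟨g, rfl⟩, by linear_combination -hxg⟩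
  obtain ⟨i', hi', z', hz', hc⟩ := Submodule.mem_sup.mp (hy c hyc)
  obtain ⟨r, rfl⟩ := mem_span_singleton'.mp hz'
  have hxg' : x * (g - y * r) ∈ I := by
    have : x * (g - y * r) = i + y * i' := by
      linear_combination -hxg - y * hc
    exact this ▸ I.add_mem hi (I.mul_mem_left y hi')
  have : g = (g - y * r) + r * y := by ring
  rw [this]
  exact Submodule.add_mem_sup (hx _ hxg') (mem_span_singleton'.mpr ⟨r, rfl⟩)

end Regular

namespace RingTheory.Sequence

variable {R S : Type*} [CommRing R] [CommRing S]

lemma isWeaklyRegular_append_singleton_iff (rs : List R) (r : R) :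
    IsWeaklyRegular R (rs ++ [r]) ↔ IsWeaklyRegular R rs ∧ IsSMulRegular (R ⧸ ofList rs) r := by
  rw [isWeaklyRegular_append_iff, isWeaklyRegular_singleton_iff, smul_eq_mul, mul_top]

lemma IsWeaklyRegular.isSMulRegular_quotient_ofList {x : R} {ys : List R}
    (h : IsWeaklyRegular R (x :: ys)) : IsSMulRegular (R ⧸ ofList ys) x := by
  induction ys using List.reverseRecOn with
  | nil =>
    rw [ofList_nil]
    exact ((isWeaklyRegular_singleton_iff R x).mp h).quotient_bot
  | append_singleton ys y ih =>
    rw [← List.cons_append, isWeaklyRegular_append_singleton_iff, ofList_cons, sup_comm] at h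
    rw [ofList_append, ofList_singleton]
    exact (ih h.1).quotient_sup_span_singleton_swap h.2

lemma IsWeaklyRegular.cons_of_ker_eq_span {f : R →+* S} (hf : Function.Surjective f) {x : R}
    (hker : RingHom.ker f = span {x}) (hx : IsSMulRegular R x) {ys : List R}
    (h : IsWeaklyRegular S (ys.map f)) : IsWeaklyRegular R (x :: ys) := by
  induction ys using List.reverseRecOn with
  | nil => exact (isWeaklyRegular_singleton_iff R x).mpr hx
  | append_singleton ys y ih =>
    rw [List.map_append, List.map_singleton, isWeaklyRegular_append_singleton_iff] at h
    rw [← List.cons_append, isWeaklyRegular_append_singleton_iff]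
    refine ⟨ih h.1, ?_⟩
    have hI : ofList (x :: ys) = (ofList (ys.map f)).comap f := by
      rw [← map_ofList, comap_map_of_surjective _ hf, ← RingHom.ker_eq_comap_bot, hker,
        ofList_cons, sup_comm]
    exact hI ▸ h.2.quotient_comap f

end RingTheory.Sequence

namespace MvPolynomial

lemma eval_eq_zero_of_isSMulRegular_quotient {σ K ι : Type*} [Finite σ] [Field K] [IsAlgClosed K]
    {q : ι → MvPolynomial σ K} {x f : MvPolynomial σ K}
    (hx : IsSMulRegular (MvPolynomial σ K ⧸ span (Set.range q)) x)
    (hf : ∀ p, (∀ i, eval p (q i) = 0) → eval p x ≠ 0 → eval p f = 0)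
    (p : σ → K) (hp : ∀ i, eval p (q i) = 0) : eval p f = 0 := by
  have hZ : ∀ p : σ → K, p ∈ zeroLocus K (span (Set.range q)) ↔ ∀ i, eval p (q i) = 0 := by
    simp [zeroLocus_span]
  have hxf : x * f ∈ vanishingIdeal K (zeroLocus K (span (Set.range q))) := by
    intro p hp
    by_cases h0 : eval p x = 0
    · simp [h0]
    · simp [hf p ((hZ p).mp hp) h0]
  rw [vanishingIdeal_zeroLocus_eq_radical] at hxf
  obtain ⟨k, hk⟩ := hxf
  rw [mul_pow] at hk
  have hfk : f ^ k ∈ span (Set.range q) := isSMulRegular_quotient_iff_mul_mem.mp (hx.pow k) _ hk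
  have hfrad : f ∈ vanishingIdeal K (zeroLocus K (span (Set.range q))) := by
    rw [vanishingIdeal_zeroLocus_eq_radical]; exact ⟨k, hfk⟩
  simpa using hfrad p ((hZ p).mpr hp)

end MvPolynomial

namespace Truncation

variable (m : ℕ)

/-- Setting `ψ₀ = 0`, with the level-2 variables moved into the coefficients. -/
noncomputable def killPsi0 :
    MvPolynomial (IdxF m) ℂ →ₐ[ℂ] MvPolynomial (Idx4 m) (MvPolynomial (Idx2 m) ℂ) :=
  aeval (Sum.elim 0 (Sum.elim (fun i => C (X i)) X))

noncomputable def liftPsi0 :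
    MvPolynomial (Idx4 m) (MvPolynomial (Idx2 m) ℂ) →+* MvPolynomial (IdxF m) ℂ :=
  eval₂Hom (rename fun i => Sum.inr (Sum.inl i)).toRingHom fun J => X (Sum.inr (Sum.inr J))

variable {m}

lemma killPsi0_rename (p : MvPolynomial (Idx2 m) ℂ) :
    killPsi0 m (rename (fun i => Sum.inr (Sum.inl i)) p) = C p := by
  rw [killPsi0, aeval_rename]
  induction p using MvPolynomial.induction_on <;> simp_all

lemma killPsi0_Qq (J : Idx4 m) : killPsi0 m (Qq J) = C (Pq J.val) := by
  rw [Qq, map_add, killPsi0_rename]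
  simp [killPsi0]

lemma killPsi0_liftPsi0 (q : MvPolynomial (Idx4 m) (MvPolynomial (Idx2 m) ℂ)) :
    killPsi0 m (liftPsi0 m q) = q := by
  suffices (killPsi0 m : _ →+* _).comp (liftPsi0 m) = RingHom.id _ from
    RingHom.congr_fun this q
  ext <;> simp [liftPsi0, killPsi0]

lemma mk_liftPsi0_killPsi0 (h : MvPolynomial (IdxF m) ℂ) :
    Ideal.Quotient.mk (span {X (Sum.inl ())}) (liftPsi0 m (killPsi0 m h)) =
      Ideal.Quotient.mk (span {X (Sum.inl ())}) h := by
  suffices ((Ideal.Quotient.mk _).comp ((liftPsi0 m).comp (killPsi0 m : _ →+* _))) =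
    Ideal.Quotient.mk (span {X (Sum.inl ())}) from RingHom.congr_fun this h
  ext i
  · simp [liftPsi0]
  · rcases i with ⟨⟩ | i | J
    · simp [killPsi0]
    · simp [killPsi0, liftPsi0]
    · simp [killPsi0, liftPsi0]

lemma killPsi0_surjective : Function.Surjective (killPsi0 m) :=
  fun q => ⟨liftPsi0 m q, killPsi0_liftPsi0 q⟩

lemma ker_killPsi0 : RingHom.ker (killPsi0 m).toRingHom = span {X (Sum.inl ())} := by
  refine le_antisymm (fun h hh => ?_) ?_
  · have hh : killPsi0 m h = 0 := hh
    rw [← Ideal.Quotient.eq_zero_iff_mem, ← mk_liftPsi0_killPsi0, hh, map_zero, map_zero]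
  · rw [span_le, Set.singleton_subset_iff]
    simp [killPsi0]

lemma isWeaklyRegular_X_cons_Qq {l : List (Idx4 m)}
    (h : IsWeaklyRegular (MvPolynomial (Idx2 m) ℂ) (l.map fun J => Pq J.val)) :
    IsWeaklyRegular (MvPolynomial (IdxF m) ℂ) (X (Sum.inl ()) :: l.map Qq) := by
  refine IsWeaklyRegular.cons_of_ker_eq_span (f := (killPsi0 m).toRingHom)
    killPsi0_surjective ker_killPsi0 ?_ ?_
  · exact isRegular_X.left.isSMulRegular
  · convert h.of_flat (S := MvPolynomial (Idx4 m) (MvPolynomial (Idx2 m) ℂ)) using 1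
    simp only [List.map_map]
    exact List.map_congr_left fun J _ => killPsi0_Qq J

end Truncation

theorem vanishing_extends_of_regular_sequence_general (n : ℕ)
    (hreg : ∃ l : List (Idx4 (n - 4)), l.Nodup ∧ (∀ J : Idx4 (n - 4), J ∈ l) ∧
      RingTheory.Sequence.IsRegular (MvPolynomial (Idx2 (n - 4)) ℂ)
        (l.map fun J => Pq J.val))
    (f : MvPolynomial (IdxF (n - 4)) ℂ)
    (hf : ∀ p : IdxF (n - 4) → ℂ,
      (∀ J : Idx4 (n - 4), MvPolynomial.eval p (Qq J) = 0) → p (Sum.inl ()) ≠ 0 →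
        MvPolynomial.eval p f = 0) :
    ∀ p : IdxF (n - 4) → ℂ,
      (∀ J : Idx4 (n - 4), MvPolynomial.eval p (Qq J) = 0) →
        MvPolynomial.eval p f = 0 := by
  obtain ⟨l, -, hl, hreg⟩ := hreg
  have hspan : ofList (l.map Qq) = span (Set.range Qq) := by
    rw [Ideal.ofList]
    congr 1
    ext q
    simp [hl]
  have hψ₀ := hspan ▸
    (Truncation.isWeaklyRegular_X_cons_Qq hreg.toIsWeaklyRegular).isSMulRegular_quotient_ofList
  exact eval_eq_zero_of_isSMulRegular_quotient hψ₀ fun p hp h0 => hf p hp (by simpa using h0)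

/-- If the quadrics `P_J` form a regular sequence in the level-2 polynomial
ring, then every polynomial vanishing on the common zero locus of the `Q_J` off the hyperplane
`{ψ₀ = 0}` vanishes on the whole common zero locus of the `Q_J`. -/
theorem vanishing_extends_of_regular_sequence (n : ℕ) (hn : 8 ≤ n)
    (hreg : ∃ l : List (Idx4 (n - 4)), l.Nodup ∧ (∀ J : Idx4 (n - 4), J ∈ l) ∧
      RingTheory.Sequence.IsRegular (MvPolynomial (Idx2 (n - 4)) ℂ)
        (l.map fun J => Pq J.val))
    (f : MvPolynomial (IdxF (n - 4)) ℂ)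
    (hf : ∀ p : IdxF (n - 4) → ℂ,
      (∀ J : Idx4 (n - 4), MvPolynomial.eval p (Qq J) = 0) → p (Sum.inl ()) ≠ 0 →
        MvPolynomial.eval p f = 0) :
    ∀ p : IdxF (n - 4) → ℂ,
      (∀ J : Idx4 (n - 4), MvPolynomial.eval p (Qq J) = 0) →
        MvPolynomial.eval p f = 0 :=
  vanishing_extends_of_regular_sequence_general n hreg f hf
end

section
/- For every integer n ≥ 15, the quadrics P_J, as J ranges over the 4-element subsets of {5,…,n}, do not form a regular sequence in the polynomial ring ℂ[ψ_{A,B}] in the 6·C(n−4,2) level-2 variables (in any ordering of the family). Consequently, the coupled cluster doubles truncation variety is not a complete intersection for n ≥ 15. -/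
open MvPolynomial

/-!
If `s` forms of degree `k` in `N` variables form a regular sequence, each of them multiplies the
Hilbert series of the quotient by `1 - t ^ k`, so the quotient has Hilbert series
`(1 - t ^ k) ^ s / (1 - t) ^ N`. Once `s ≥ N` this is a polynomial, so the ideal contains every
form of large degree, in particular a power of each variable, and the forms have no common zero
other than `0`.

For `n ≥ 15` there are `C(n-4, 4) ≥ 6 C(n-4, 2)` quadrics `P_J`, at least as many as variables,
and they all vanish at the point with `ψ_{{1,2},B} = 1` and all other coordinates `0`: each
monomial of `P_J` contains a variable `ψ_{A,B}` with `A ≠ {1,2}`.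
-/

open Module RingTheory.Sequence

namespace MvPolynomial

attribute [local instance] gradedAlgebra

theorem homogeneousComponent_add_mul_of_isHomogeneous {σ R : Type*} [CommSemiring R]
    {f : MvPolynomial σ R} {k : ℕ} (hf : f.IsHomogeneous k) (b : MvPolynomial σ R) (d : ℕ) :
    homogeneousComponent (d + k) (b * f) = homogeneousComponent d b * f := by
  conv_lhs => rw [← sum_homogeneousComponent b, Finset.sum_mul, map_sum]
  have h e : homogeneousComponent (d + k) (homogeneousComponent e b * f) =
      if d = e then homogeneousComponent e b * f else 0 := by
    rw [homogeneousComponent_of_mem ((homogeneousComponent_isHomogeneous e b).mul hf)]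
    simp only [Nat.add_right_cancel_iff]
  rw [Finset.sum_congr rfl fun e _ => h e, Finset.sum_ite_eq]
  split_ifs with hd
  · rfl
  · rw [homogeneousComponent_eq_zero _ _ (by simpa using hd), zero_mul]

theorem homogeneousComponent_mul_of_isHomogeneous_of_lt {σ R : Type*} [CommSemiring R]
    {f : MvPolynomial σ R} {k : ℕ} (hf : f.IsHomogeneous k) (b : MvPolynomial σ R) {d : ℕ}
    (hd : d < k) : homogeneousComponent d (b * f) = 0 := by
  conv_lhs => rw [← sum_homogeneousComponent b, Finset.sum_mul, map_sum]
  refine Finset.sum_eq_zero fun e _ => ?_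
  rw [homogeneousComponent_of_mem ((homogeneousComponent_isHomogeneous e b).mul hf),
    if_neg (by omega)]

theorem _root_.Ideal.IsHomogeneous.homogeneousComponent_mem {σ R : Type*} [CommSemiring R]
    {I : Ideal (MvPolynomial σ R)} (hI : I.IsHomogeneous (homogeneousSubmodule σ R)) (d : ℕ)
    {a : MvPolynomial σ R} (ha : a ∈ I) : homogeneousComponent d a ∈ I :=
  (decomposition.decompose'_apply a d).symm ▸ hI d ha

theorem isHomogeneous_ofList {σ R : Type*} [CommSemiring R] {fs : List (MvPolynomial σ R)}
    {k : ℕ} (hfs : ∀ f ∈ fs, f.IsHomogeneous k) :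
    (Ideal.ofList fs).IsHomogeneous (homogeneousSubmodule σ R) :=
  Ideal.homogeneous_span _ _ fun f hf => ⟨k, hfs f hf⟩

variable {σ K : Type*} [Field K]

instance [Finite σ] (d : ℕ) : Module.Finite K (homogeneousSubmodule σ K d) :=
  Module.Finite.iff_fg.2 (homogeneousSubmodule_fg σ K d)

theorem finrank_homogeneousSubmodule [Fintype σ] (d : ℕ) :
    finrank K (homogeneousSubmodule σ K d) = (Fintype.card σ + d - 1).choose d := by
  classical
  have hmonomials :
      {μ : σ →₀ ℕ | μ.degree = d} = ↑((Finset.univ : Finset σ).finsuppAntidiag d) := by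
    ext μ
    simp [Finsupp.degree_eq_sum]
  rw [homogeneousSubmodule_eq_finsupp_supported, hmonomials,
    (AddMonoidAlgebra.supportedEquivFinsupp (R := K) (S := K) _).finrank_eq,
    finrank_finsupp_self]
  simp [Finset.card_finsuppAntidiag_nat_eq_choose]

noncomputable def degreePart (I : Ideal (MvPolynomial σ K)) (d : ℕ) :
    Submodule K (MvPolynomial σ K) :=
  I.restrictScalars K ⊓ homogeneousSubmodule σ K d

instance [Finite σ] (I : Ideal (MvPolynomial σ K)) (d : ℕ) :
    FiniteDimensional K (degreePart I d) :=
  Submodule.finiteDimensional_of_le inf_le_right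

noncomputable def hilbertFunction (I : Ideal (MvPolynomial σ K)) (d : ℕ) : ℤ :=
  finrank K (homogeneousSubmodule σ K d) - finrank K (degreePart I d)

noncomputable def hilbertSeries (I : Ideal (MvPolynomial σ K)) : PowerSeries ℤ :=
  PowerSeries.mk (hilbertFunction I)

theorem map_mulRight_homogeneousSubmodule_le {f : MvPolynomial σ K} {k : ℕ}
    (hf : f.IsHomogeneous k) (d : ℕ) :
    (homogeneousSubmodule σ K d).map (LinearMap.mulRight K f) ≤
      homogeneousSubmodule σ K (d + k) := by
  rintro _ ⟨b, hb, rfl⟩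
  exact hb.mul hf

theorem finrank_map_mulRight {f : MvPolynomial σ K} (hf : f ≠ 0)
    (W : Submodule K (MvPolynomial σ K)) :
    finrank K (W.map (LinearMap.mulRight K f)) = finrank K W :=
  (Submodule.equivMapOfInjective _ (mul_left_injective₀ hf) W).finrank_eq.symm

section AddGenerator

variable {I : Ideal (MvPolynomial σ K)} {f : MvPolynomial σ K} {k : ℕ}

theorem degreePart_sup_span_singleton (hI : I.IsHomogeneous (homogeneousSubmodule σ K))
    (hf : f.IsHomogeneous k) (d : ℕ) :
    degreePart (I ⊔ Ideal.span {f}) (d + k) =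
      degreePart I (d + k) ⊔ (homogeneousSubmodule σ K d).map (LinearMap.mulRight K f) := by
  refine le_antisymm ?_ (sup_le (fun g hg => ⟨Ideal.mem_sup_left hg.1, hg.2⟩) ?_)
  · rintro g ⟨hgI, hgd⟩
    obtain ⟨a, haI, b, hb, rfl⟩ := Submodule.mem_sup.1 hgI
    obtain ⟨c, rfl⟩ := Ideal.mem_span_singleton'.1 hb
    have hsplit : a + c * f =
        homogeneousComponent (d + k) a + homogeneousComponent d c * f := by
      rw [← homogeneousComponent_add_mul_of_isHomogeneous hf, ← map_add,
        homogeneousComponent_of_mem hgd, if_pos rfl]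
    rw [hsplit]
    exact Submodule.add_mem_sup
      ⟨hI.homogeneousComponent_mem _ haI, homogeneousComponent_mem _ _⟩
      ⟨_, homogeneousComponent_mem d c, rfl⟩
  · rintro _ ⟨b, hb, rfl⟩
    exact ⟨Ideal.mem_sup_right (Ideal.mul_mem_left _ b (Ideal.mem_span_singleton_self f)),
      map_mulRight_homogeneousSubmodule_le hf d ⟨b, hb, rfl⟩⟩

theorem degreePart_sup_span_singleton_of_lt (hI : I.IsHomogeneous (homogeneousSubmodule σ K))
    (hf : f.IsHomogeneous k) {d : ℕ} (hd : d < k) :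
    degreePart (I ⊔ Ideal.span {f}) d = degreePart I d := by
  refine le_antisymm ?_ fun g hg => ⟨Ideal.mem_sup_left hg.1, hg.2⟩
  rintro g ⟨hgI, hgd⟩
  obtain ⟨a, haI, b, hb, rfl⟩ := Submodule.mem_sup.1 hgI
  obtain ⟨c, rfl⟩ := Ideal.mem_span_singleton'.1 hb
  have hsplit : a + c * f = homogeneousComponent d a := by
    rw [← add_zero (homogeneousComponent d a),
      ← homogeneousComponent_mul_of_isHomogeneous_of_lt hf c hd, ← map_add,
      homogeneousComponent_of_mem hgd, if_pos rfl]
  rw [hsplit]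
  exact ⟨hI.homogeneousComponent_mem _ haI, homogeneousComponent_mem _ _⟩

theorem degreePart_inf_map_mulRight (hreg : ∀ g, g * f ∈ I → g ∈ I)
    (hf : f.IsHomogeneous k) (d : ℕ) :
    degreePart I (d + k) ⊓ (homogeneousSubmodule σ K d).map (LinearMap.mulRight K f) =
      (degreePart I d).map (LinearMap.mulRight K f) := by
  refine le_antisymm ?_ ?_
  · rintro _ ⟨⟨hI, -⟩, b, hb, rfl⟩
    exact ⟨b, ⟨hreg b hI, hb⟩, rfl⟩
  · rintro _ ⟨b, ⟨hbI, hb⟩, rfl⟩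
    exact ⟨⟨I.mul_mem_right f hbI,
      map_mulRight_homogeneousSubmodule_le hf d ⟨b, hb, rfl⟩⟩, b, hb, rfl⟩

variable [Finite σ]

theorem hilbertFunction_sup_span_singleton (hI : I.IsHomogeneous (homogeneousSubmodule σ K))
    (hf : f.IsHomogeneous k) (hf0 : f ≠ 0) (hreg : ∀ g, g * f ∈ I → g ∈ I) (d : ℕ) :
    hilbertFunction (I ⊔ Ideal.span {f}) (d + k) =
      hilbertFunction I (d + k) - hilbertFunction I d := by
  have h := Submodule.finrank_sup_add_finrank_inf_eq (degreePart I (d + k))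
    ((homogeneousSubmodule σ K d).map (LinearMap.mulRight K f))
  rw [degreePart_inf_map_mulRight hreg hf, finrank_map_mulRight hf0,
    finrank_map_mulRight hf0] at h
  rw [hilbertFunction, hilbertFunction, hilbertFunction, degreePart_sup_span_singleton hI hf]
  omega

theorem hilbertSeries_sup_span_singleton (hI : I.IsHomogeneous (homogeneousSubmodule σ K))
    (hf : f.IsHomogeneous k) (hf0 : f ≠ 0) (hreg : ∀ g, g * f ∈ I → g ∈ I) :
    hilbertSeries (I ⊔ Ideal.span {f}) = (1 - PowerSeries.X ^ k) * hilbertSeries I := by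
  ext d
  simp only [sub_mul, one_mul, map_sub, PowerSeries.coeff_X_pow_mul', hilbertSeries,
    PowerSeries.coeff_mk]
  split_ifs with hd
  · obtain ⟨e, rfl⟩ := Nat.exists_eq_add_of_le' hd
    rw [Nat.add_sub_cancel, hilbertFunction_sup_span_singleton hI hf hf0 hreg]
  · rw [sub_zero, hilbertFunction, hilbertFunction,
      degreePart_sup_span_singleton_of_lt hI hf (not_le.1 hd)]

end AddGenerator

theorem one_sub_X_pow_mul_hilbertSeries_bot [Fintype σ] :
    (1 - PowerSeries.X) ^ Fintype.card σ * hilbertSeries (⊥ : Ideal (MvPolynomial σ K)) =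
      1 := by
  have hseries : hilbertSeries (⊥ : Ideal (MvPolynomial σ K)) =
      PowerSeries.mk fun d => ((Fintype.card σ + d - 1).choose d : ℤ) := by
    ext d
    have hbot : degreePart (⊥ : Ideal (MvPolynomial σ K)) d = ⊥ := by simp [degreePart]
    simp [hilbertSeries, hilbertFunction, hbot, finrank_homogeneousSubmodule]
  rw [hseries]
  rcases Nat.eq_zero_or_pos (Fintype.card σ) with h | h
  · ext (_ | d) <;> simp [h, PowerSeries.coeff_one]
  · obtain ⟨t, ht⟩ := Nat.exists_eq_add_of_lt h
    rw [ht, zero_add, mul_comm]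
    convert PowerSeries.mk_add_choose_mul_one_sub_pow_eq_one (S := ℤ) (d := t) using 4 with d
    rw [Nat.add_right_comm, Nat.add_sub_cancel, ← Nat.choose_symm_add]

theorem hilbertSeries_ofList [Finite σ] {fs : List (MvPolynomial σ K)} {k : ℕ}
    (hfs : IsWeaklyRegular (MvPolynomial σ K) fs) (hhom : ∀ f ∈ fs, f.IsHomogeneous k)
    (hne : Ideal.ofList fs ≠ ⊤) :
    hilbertSeries (Ideal.ofList fs) =
      (1 - PowerSeries.X ^ k) ^ fs.length * hilbertSeries (⊥ : Ideal (MvPolynomial σ K)) := by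
  induction fs using List.reverseRecOn with
  | nil => simp
  | append_singleton l f ih =>
    rw [isWeaklyRegular_append_iff, isWeaklyRegular_singleton_iff] at hfs
    rw [Ideal.ofList_append, Ideal.ofList_singleton] at hne ⊢
    have hhom' : ∀ g ∈ l, g.IsHomogeneous k := fun g hg => hhom g (List.mem_append_left _ hg)
    have hreg (g : MvPolynomial σ K) (hg : g * f ∈ Ideal.ofList l) : g ∈ Ideal.ofList l := by
      have := mem_of_isSMulRegular_quotient_of_smul_mem hfs.2 (x := g)
      rw [Ideal.smul_eq_mul, Ideal.mul_top, smul_eq_mul, mul_comm] at this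
      exact this hg
    have hne' : Ideal.ofList l ≠ ⊤ := ne_top_of_le_ne_top hne le_sup_left
    have hf0 : f ≠ 0 := by
      rintro rfl
      exact hne' ((Ideal.eq_top_iff_one _).2 (hreg 1 (by simp)))
    rw [hilbertSeries_sup_span_singleton (isHomogeneous_ofList hhom') (hhom f (by simp)) hf0
      hreg, ih hfs.1 hhom' hne', List.length_append, List.length_singleton, pow_succ]
    ring

theorem exists_hilbertFunction_ofList_eq_zero [Fintype σ] {fs : List (MvPolynomial σ K)}
    {k : ℕ} (hfs : IsWeaklyRegular (MvPolynomial σ K) fs)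
    (hhom : ∀ f ∈ fs, f.IsHomogeneous k) (hne : Ideal.ofList fs ≠ ⊤)
    (hcard : Fintype.card σ ≤ fs.length) :
    ∃ d, hilbertFunction (Ideal.ofList fs) d = 0 := by
  set s := fs.length
  set N := Fintype.card σ
  set p : Polynomial ℤ :=
    (∑ i ∈ Finset.range k, Polynomial.X ^ i) ^ s * (1 - Polynomial.X) ^ (s - N)
  have hp : hilbertSeries (Ideal.ofList fs) = p := calc
    _ = (1 - PowerSeries.X ^ k) ^ s * hilbertSeries ⊥ := hilbertSeries_ofList hfs hhom hne
    _ = (∑ i ∈ Finset.range k, PowerSeries.X ^ i) ^ s * (1 - PowerSeries.X) ^ (s - N) *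
          ((1 - PowerSeries.X) ^ N * hilbertSeries (⊥ : Ideal (MvPolynomial σ K))) := by
      have hsplit : (1 - PowerSeries.X : PowerSeries ℤ) ^ s =
          (1 - PowerSeries.X) ^ (s - N) * (1 - PowerSeries.X) ^ N := by
        rw [← pow_add, Nat.sub_add_cancel hcard]
      rw [← mul_neg_geom_sum, mul_pow, hsplit]
      ring
    _ = p := by
      rw [one_sub_X_pow_mul_hilbertSeries_bot, mul_one,
        ← Polynomial.coeToPowerSeries.ringHom_apply]
      simp only [p, map_mul, map_pow, map_sum, map_sub, map_one,
        Polynomial.coeToPowerSeries.ringHom_apply, Polynomial.coe_X]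
  refine ⟨p.natDegree + 1, ?_⟩
  have h := congrArg (PowerSeries.coeff (p.natDegree + 1)) hp
  rwa [hilbertSeries, PowerSeries.coeff_mk, Polynomial.coeff_coe,
    Polynomial.coeff_eq_zero_of_natDegree_lt (Nat.lt_succ_self _)] at h

theorem homogeneousSubmodule_le_of_hilbertFunction_eq_zero [Finite σ]
    {I : Ideal (MvPolynomial σ K)} {d : ℕ} (h : hilbertFunction I d = 0) :
    homogeneousSubmodule σ K d ≤ I.restrictScalars K := by
  have hd : degreePart I d = homogeneousSubmodule σ K d :=
    Submodule.eq_of_le_of_finrank_eq inf_le_right (by rw [hilbertFunction] at h; omega)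
  exact hd ▸ inf_le_left

theorem not_isWeaklyRegular_of_card_le_length [Fintype σ] {fs : List (MvPolynomial σ K)}
    {k : ℕ} (hhom : ∀ f ∈ fs, f.IsHomogeneous k) {x : σ → K} (hx : x ≠ 0)
    (hev : ∀ f ∈ fs, eval x f = 0) (hcard : Fintype.card σ ≤ fs.length) :
    ¬ IsWeaklyRegular (MvPolynomial σ K) fs := by
  intro hfs
  have hker : Ideal.ofList fs ≤ RingHom.ker (eval x) := Ideal.span_le.2 hev
  have hne : Ideal.ofList fs ≠ ⊤ := fun h => by
    simpa using hker (h ▸ Submodule.mem_top : (1 : MvPolynomial σ K) ∈ Ideal.ofList fs)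
  obtain ⟨d, hd⟩ := exists_hilbertFunction_ofList_eq_zero hfs hhom hne hcard
  obtain ⟨v, hv⟩ := Function.ne_iff.1 hx
  have hXv := hker <|
    homogeneousSubmodule_le_of_hilbertFunction_eq_zero hd (isHomogeneous_X_pow v d)
  rw [RingHom.mem_ker, map_pow, eval_X] at hXv
  exact hv (pow_eq_zero_iff'.1 hXv).1

end MvPolynomial

theorem psi_isHomogeneous {m : ℕ} (A : Finset (Fin 4)) (B : Finset (Fin m)) :
    (psi A B).IsHomogeneous 1 := by
  unfold psi
  split_ifs
  · exact isHomogeneous_X _ _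
  · exact isHomogeneous_zero _ _ _

theorem Pq_isHomogeneous {m : ℕ} (J : Finset (Fin m)) : (Pq J).IsHomogeneous 2 := by
  refine IsHomogeneous.sum _ _ _ fun I _ => ?_
  have hsign : ((shuffleSign J I : MvPolynomial (Idx2 m) ℂ)).IsHomogeneous 0 := by
    rw [← map_intCast (C : ℂ →+* MvPolynomial (Idx2 m) ℂ)]
    exact isHomogeneous_C _ _
  have hprod (A A' : Finset (Fin 4)) (B B' : Finset (Fin m)) :
      (psi A B * psi A' B').IsHomogeneous 2 :=
    (psi_isHomogeneous A B).mul (psi_isHomogeneous A' B')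
  exact hsign.mul (((hprod _ _ _ _).sub (hprod _ _ _ _)).add (hprod _ _ _ _))

def psiPoint (m : ℕ) : Idx2 m → ℂ := fun v => if v.1.1 = {0, 1} then 1 else 0

theorem psiPoint_ne_zero {m : ℕ} (hm : 2 ≤ m) : psiPoint m ≠ 0 := by
  have hB : ({⟨0, by omega⟩, ⟨1, by omega⟩} : Finset (Fin m)).card = 2 :=
    Finset.card_pair (by simp)
  refine Function.ne_iff.2 ⟨⟨⟨{0, 1}, by decide⟩, ⟨_, hB⟩⟩, ?_⟩
  simp [psiPoint]

theorem eval_psiPoint_psi {m : ℕ} {A : Finset (Fin 4)} (hA : A ≠ {0, 1}) (B : Finset (Fin m)) :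
    eval (psiPoint m) (psi A B) = 0 := by
  unfold psi
  split_ifs
  · simp [psiPoint, hA]
  · exact map_zero _

theorem eval_psiPoint_Pq {m : ℕ} (J : Finset (Fin m)) : eval (psiPoint m) (Pq J) = 0 := by
  rw [Pq, map_sum]
  refine Finset.sum_eq_zero fun I _ => ?_
  simp only [map_mul, map_add, map_sub,
    eval_psiPoint_psi (by decide : ({2, 3} : Finset (Fin 4)) ≠ {0, 1}),
    eval_psiPoint_psi (by decide : ({0, 2} : Finset (Fin 4)) ≠ {0, 1}),
    eval_psiPoint_psi (by decide : ({0, 3} : Finset (Fin 4)) ≠ {0, 1})]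
  ring

theorem card_Idx2 (m : ℕ) : Fintype.card (Idx2 m) = 6 * m.choose 2 := by
  simp [Fintype.card_prod, Fintype.card_finset_len, show Nat.choose 4 2 = 6 from rfl]

theorem card_Idx4 (m : ℕ) : Fintype.card (Idx4 m) = m.choose 4 := by
  simp [Fintype.card_finset_len]

theorem six_mul_choose_two_le_choose_four {m : ℕ} (hm : 11 ≤ m) :
    6 * m.choose 2 ≤ m.choose 4 := by
  have h := Nat.choose_mul (n := m) (k := 4) (s := 2) (by norm_num)
  have h36 : (9 : ℕ).choose 2 ≤ (m - 2).choose 2 := Nat.choose_le_choose 2 (by omega)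
  simp only [show (4 : ℕ).choose 2 = 6 from rfl, show (9 : ℕ).choose 2 = 36 from rfl] at h h36
  nlinarith

theorem PJ_not_regular_sequence_of_ge_fifteen_general (n : ℕ) (hn : 15 ≤ n)
    (l : List (Idx4 (n - 4))) (hall : ∀ J : Idx4 (n - 4), J ∈ l) :
    ¬ RingTheory.Sequence.IsRegular (MvPolynomial (Idx2 (n - 4)) ℂ)
        (l.map fun J => Pq J.val) := by
  intro hreg
  have hcard : Fintype.card (Idx2 (n - 4)) ≤ (l.map fun J => Pq J.val).length := calc
    _ = 6 * (n - 4).choose 2 := card_Idx2 _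
    _ ≤ (n - 4).choose 4 := six_mul_choose_two_le_choose_four (by omega)
    _ = Finset.univ.card := (card_Idx4 _).symm
    _ ≤ l.toFinset.card := Finset.card_le_card fun J _ => List.mem_toFinset.2 (hall J)
    _ ≤ _ := (List.toFinset_card_le l).trans_eq (List.length_map _).symm
  refine not_isWeaklyRegular_of_card_le_length (k := 2) ?_ (psiPoint_ne_zero (by omega)) ?_
    hcard hreg.toIsWeaklyRegular
  · simp only [List.mem_map]
    rintro _ ⟨J, -, rfl⟩
    exact Pq_isHomogeneous J.val
  · simp only [List.mem_map]
    rintro _ ⟨J, -, rfl⟩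
    exact eval_psiPoint_Pq J.val

/-- For `n ≥ 15`, the quadrics `P_J` do not form a regular sequence in
`ℂ[ψ_{A,B}]`, in any ordering of the family. -/
theorem PJ_not_regular_sequence_of_ge_fifteen (n : ℕ) (hn : 15 ≤ n)
    (l : List (Idx4 (n - 4))) (hnd : l.Nodup) (hall : ∀ J : Idx4 (n - 4), J ∈ l) :
    ¬ RingTheory.Sequence.IsRegular (MvPolynomial (Idx2 (n - 4)) ℂ)
        (l.map fun J => Pq J.val) :=
  PJ_not_regular_sequence_of_ge_fifteen_general n hn l hall
end

section
/- Fix an integer n ≥ 8 and a 4-element subset J = {j₁<j₂<j₃<j₄} ⊆ {5,…,n}. Let S = ℂ[e_A, f_B] be the polynomial ring in the variables e_A indexed by 2-element subsets A of {1,2,3,4} and f_B indexed by 2-element subsets B of {5,…,n}. Under the ℂ-algebra map ℂ[ψ_{A,B}] → S sending each level-2 variable ψ_{A,B} to 2·e_A·f_B, the quadric P_J is mapped to 8·Pf(e)·Pf_J(f), where Pf(e) = e_{{1,2}}e_{{3,4}} − e_{{1,3}}e_{{2,4}} + e_{{1,4}}e_{{2,3}} and Pf_J(f) = f_{{j₁,j₂}}f_{{j₃,j₄}}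 − f_{{j₁,j₃}}f_{{j₂,j₄}} + f_{{j₁,j₄}}f_{{j₂,j₃}} are the 4×4 Pfaffians. In other words, in the disconnected-doubles regime each quadric P_J factors exactly as a product of two Pfaffians: P_J = 8·Pf(e)⊗Pf([f]_J). -/
open MvPolynomial

/-- Index type for the ring `S = ℂ[e_A, f_B]`: variables `e_A` for `A` a 2-element subset of
`{1,2,3,4}` and `f_B` for `B` a 2-element subset of `{5,…,n}`. -/
abbrev IdxEF (m : ℕ) : Type :=
  {A : Finset (Fin 4) // A.card = 2} ⊕ {B : Finset (Fin m) // B.card = 2}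

/-- The variable `e_A` of `S`. -/
noncomputable def eV {m : ℕ} (A : Finset (Fin 4)) : MvPolynomial (IdxEF m) ℂ :=
  if h : A.card = 2 then MvPolynomial.X (Sum.inl ⟨A, h⟩) else 0

/-- The variable `f_B` of `S`. -/
noncomputable def fV {m : ℕ} (B : Finset (Fin m)) : MvPolynomial (IdxEF m) ℂ :=
  if h : B.card = 2 then MvPolynomial.X (Sum.inr ⟨B, h⟩) else 0

-- aux
lemma filter_product_map_card {m k : ℕ} (f : Fin k ↪ Fin m) (hf : StrictMono f)
    (s t : Finset (Fin k)) :
    (((s.map f) ×ˢ (t.map f)).filter fun p => p.2 < p.1).card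
      = ((s ×ˢ t).filter fun p => p.2 < p.1).card := by
  symm
  apply Finset.card_bij (fun p _ => (f p.1, f p.2))
  · rintro ⟨a, b⟩ h
    simp only [Finset.mem_filter, Finset.mem_product, Finset.mem_map] at h ⊢
    exact ⟨⟨⟨a, h.1.1, rfl⟩, ⟨b, h.1.2, rfl⟩⟩, hf h.2⟩
  · rintro ⟨a, b⟩ _ ⟨c, d⟩ _ h
    simp only [Prod.mk.injEq] at h
    exact Prod.ext (f.injective h.1) (f.injective h.2)
  · rintro ⟨a, b⟩ h
    simp only [Finset.mem_filter, Finset.mem_product, Finset.mem_map] at h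
    obtain ⟨⟨⟨x, hx, rfl⟩, ⟨y, hy, rfl⟩⟩, hlt⟩ := h
    exact ⟨(x, y), by simp [Finset.mem_filter, hx, hy, hf.lt_iff_lt.mp hlt], rfl⟩

lemma finsetMapSdiff {m k : ℕ} (f : Fin k ↪ Fin m) (s t : Finset (Fin k)) :
    (s \ t).map f = s.map f \ t.map f := by
  simp only [Finset.map_eq_image]
  exact Finset.image_sdiff s t f.injective

lemma shuffleSign_map {m k : ℕ} (f : Fin k ↪ Fin m) (hf : StrictMono f)
    (J I : Finset (Fin k)) :
    shuffleSign (J.map f) (I.map f) = shuffleSign J I := by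
  rw [shuffleSign, shuffleSign, ← finsetMapSdiff, filter_product_map_card f hf]

lemma aeval_psi {m : ℕ} (A : Finset (Fin 4)) (B : Finset (Fin m)) :
    MvPolynomial.aeval
        (fun i : Idx2 m => 2 * eV (m := m) i.1.val * fV (m := m) i.2.val)
        (psi A B) = 2 * eV A * fV B := by
  rw [psi]
  split_ifs with h
  · rw [aeval_X, eV, fV, dif_pos h.1, dif_pos h.2]
  · rcases not_and_or.mp h with h' | h' <;> simp [eV, fV, h']

/-- Under the substitution `ψ_{A,B} ↦ 2·e_A·f_B` (disconnected doubles),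
the quadric `P_J` factors exactly as `8·Pf(e)·Pf_J(f)`, the product of the two `4×4`
Pfaffians. -/
theorem PJ_eq_eight_mul_pfaffian_mul_pfaffian (n : ℕ) (hn : 8 ≤ n)
    (j₁ j₂ j₃ j₄ : Fin (n - 4)) (h₁₂ : j₁ < j₂) (h₂₃ : j₂ < j₃) (h₃₄ : j₃ < j₄) :
    MvPolynomial.aeval
        (fun i : Idx2 (n - 4) =>
          2 * eV (m := n - 4) i.1.val * fV (m := n - 4) i.2.val)
        (Pq ({j₁, j₂, j₃, j₄} : Finset (Fin (n - 4))))
      = 8 * (eV {0, 1} * eV {2, 3} - eV {0, 2} * eV {1, 3} + eV {0, 3} * eV {1, 2})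
          * (fV {j₁, j₂} * fV {j₃, j₄} - fV {j₁, j₃} * fV {j₂, j₄}
              + fV {j₁, j₄} * fV {j₂, j₃}) := by
  have hg : StrictMono (![j₁, j₂, j₃, j₄] : Fin 4 → Fin (n - 4)) := by
    have : ∀ i : Fin 3, (![j₁, j₂, j₃, j₄] : Fin 4 → Fin (n-4)) i.castSucc
        < ![j₁, j₂, j₃, j₄] i.succ := by
      intro i; fin_cases i <;> simpa
    exact Fin.strictMono_iff_lt_succ.mpr this
  set f : Fin 4 ↪ Fin (n - 4) := ⟨![j₁, j₂, j₃, j₄], hg.injective⟩ with hfdef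
  have hf : StrictMono f := hg
  have hm01 : (({0,1} : Finset (Fin 4)).map f) = {j₁, j₂} := by
    simp [hfdef]
  have hm02 : (({0,2} : Finset (Fin 4)).map f) = {j₁, j₃} := by
    simp [hfdef]
  have hm03 : (({0,3} : Finset (Fin 4)).map f) = {j₁, j₄} := by
    simp [hfdef]
  have hm12 : (({1,2} : Finset (Fin 4)).map f) = {j₂, j₃} := by
    simp [hfdef]
  have hm13 : (({1,3} : Finset (Fin 4)).map f) = {j₂, j₄} := by
    simp [hfdef]
  have hm23 : (({2,3} : Finset (Fin 4)).map f) = {j₃, j₄} := by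
    simp [hfdef]
  have hJ : ({j₁, j₂, j₃, j₄} : Finset (Fin (n - 4))) = Finset.univ.map f := by
    rw [show (Finset.univ : Finset (Fin 4)) = {0,1,2,3} from by decide]
    simp [hfdef]
  have hsd : ∀ I : Finset (Fin 4),
      Finset.univ.map f \ I.map f = (Finset.univ \ I).map f := by
    intro I; rw [finsetMapSdiff]
  have hss : ∀ I : Finset (Fin 4),
      shuffleSign (Finset.univ.map f) (I.map f) = shuffleSign Finset.univ I := by
    intro I; exact shuffleSign_map f hf _ _
  rw [Pq, hJ, Finset.powersetCard_map, Finset.sum_map]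
  simp only [show ∀ x : Finset (Fin 4), (Finset.mapEmbedding f).toEmbedding x = Finset.map f x from fun _ => rfl, hsd, hss]
  rw [show (Finset.univ : Finset (Fin 4)).powersetCard 2
      = {{0,1},{0,2},{0,3},{1,2},{1,3},{2,3}} from by decide]
  rw [Finset.sum_insert (by decide), Finset.sum_insert (by decide),
    Finset.sum_insert (by decide), Finset.sum_insert (by decide),
    Finset.sum_insert (by decide), Finset.sum_singleton]
  rw [show (Finset.univ \ {0,1} : Finset (Fin 4)) = {2,3} from by decide,
    show (Finset.univ \ {0,2} : Finset (Fin 4)) = {1,3} from by decide,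
    show (Finset.univ \ {0,3} : Finset (Fin 4)) = {1,2} from by decide,
    show (Finset.univ \ {1,2} : Finset (Fin 4)) = {0,3} from by decide,
    show (Finset.univ \ {1,3} : Finset (Fin 4)) = {0,2} from by decide,
    show (Finset.univ \ {2,3} : Finset (Fin 4)) = {0,1} from by decide]
  rw [hm01, hm02, hm03, hm12, hm13, hm23,
    show shuffleSign (Finset.univ : Finset (Fin 4)) {0,1} = 1 from by decide,
    show shuffleSign (Finset.univ : Finset (Fin 4)) {0,2} = -1 from by decide,
    show shuffleSign (Finset.univ : Finset (Fin 4)) {0,3} = 1 from by decide,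
    show shuffleSign (Finset.univ : Finset (Fin 4)) {1,2} = 1 from by decide,
    show shuffleSign (Finset.univ : Finset (Fin 4)) {1,3} = -1 from by decide,
    show shuffleSign (Finset.univ : Finset (Fin 4)) {2,3} = 1 from by decide]
  simp only [map_add, map_sub, map_mul, map_intCast, aeval_psi]
  push_cast
  ring
end

section
/- Let n = 8 and let R = ℂ[ψ_I : I a 4-element subset of {1,…,8}] be the polynomial ring in the 70 variables ψ_I. Then the ideal of R generated by the 32 variables ψ_I with |I ∩ {1,2,3,4}| odd (the level-1 and level-3 variables) together with the single quadric Q_{5678} = −ψ_{1234}·ψ_{5678} + P_{5678} is a prime ideal. (Hence for n = 8 the coupled cluster doubles truncation variety is the degree-2 hypersurface cut out by Q_{5678} inside the linear subspace where all level-1 and level-3 coordinates vanish, and no saturation is needed.) -/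
open MvPolynomial

/-- Index type of the ring `R = ℂ[ψ_I]`: `I` ranges over 4-element subsets of `{1,…,8}`
(encoded as `Fin 8`). -/
abbrev Idx8 : Type := {I : Finset (Fin 8) // I.card = 4}

/-- The variable `ψ_{A ∪ B}` of `R` (junk value `0` if `(A ∪ B).card ≠ 4`): for `A` a
2-element subset of `{1,2,3,4}` and `B` a 2-element subset of `{5,6,7,8}` this is the
level-2 variable `ψ_{A,B}`. -/
noncomputable def v8 (A B : Finset (Fin 8)) : MvPolynomial Idx8 ℂ :=
  if h : (A ∪ B).card = 4 then X ⟨A ∪ B, h⟩ else 0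

/-- The sign of the permutation of `J` listing the elements of `I` in increasing order
followed by those of `J \ I` in increasing order. -/
def shuffleSign8 (J I : Finset (Fin 8)) : ℤ :=
  (-1) ^ ((I ×ˢ (J \ I)).filter fun p => p.2 < p.1).card

/-- The quadric `P_{5678}` (in the `Fin 8` encoding, `{1,2,3,4} = {0,1,2,3}` and
`{5,6,7,8} = {4,5,6,7}`). -/
noncomputable def P5678 : MvPolynomial Idx8 ℂ :=
  ∑ I ∈ ({4, 5, 6, 7} : Finset (Fin 8)).powersetCard 2,
    (shuffleSign8 {4, 5, 6, 7} I : MvPolynomial Idx8 ℂ) *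
      (v8 {0, 1} I * v8 {2, 3} ({4, 5, 6, 7} \ I)
        - v8 {0, 2} I * v8 {1, 3} ({4, 5, 6, 7} \ I)
        + v8 {0, 3} I * v8 {1, 2} ({4, 5, 6, 7} \ I))

/-- The homogeneous quadric `Q_{5678} = -ψ_{1234}·ψ_{5678} + P_{5678}`. -/
noncomputable def Q5678 : MvPolynomial Idx8 ℂ :=
  - X (⟨{0, 1, 2, 3}, by decide⟩ : Idx8) * X (⟨{4, 5, 6, 7}, by decide⟩ : Idx8) + P5678

/-!
Setting the level-1 and level-3 variables to zero identifies the quotient of `R` by them with the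
polynomial ring in the remaining variables, and `Q_{5678}` lies in that subring; so the ideal is
prime as soon as `Q_{5678}` is a prime element. Since `P_{5678}` only involves level-2 variables,
`Q_{5678}` is linear in `ψ_{5678}` with leading coefficient `-ψ_{1234}` and constant term
`P_{5678}`. The leading coefficient is prime and does not divide `P_{5678}` (which does not vanish
on `ψ_{1234} = 0`), so by Gauss's lemma `Q_{5678}` is irreducible, hence prime.
-/

theorem Ideal.span_union_singleton_eq_comap {A B F : Type*} [CommRing A] [CommRing B]
    [FunLike F A B] [RingHomClass F A B] {f : F} (hf : Function.Surjective f) {S : Set A}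
    (hker : RingHom.ker f = Ideal.span S) (a : A) :
    Ideal.span (S ∪ {a}) = (Ideal.span {f a}).comap f := by
  rw [← Set.image_singleton, ← Ideal.map_span, Ideal.comap_map_of_surjective' f hf, hker,
    Ideal.span_union, sup_comm]

theorem Polynomial.prime_C_mul_X_add_C {D : Type*} [CommRing D] [IsDomain D]
    [UniqueFactorizationMonoid D] {a b : D} (ha : Prime a) (hab : ¬ a ∣ b) :
    Prime (C a * X + C b) := by
  have hprim : (C a * X + C b).IsPrimitive := by
    intro r hr
    rw [C_dvd_iff_dvd_coeff] at hr
    obtain ⟨s, rfl⟩ : r ∣ a := by simpa using hr 1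
    rcases ha.irreducible.isUnit_or_isUnit rfl with h | h
    · exact h
    · exact absurd ((h.mul_right_dvd.mpr dvd_rfl).trans (by simpa using hr 0)) hab
  rw [← UniqueFactorizationMonoid.irreducible_iff_prime]
  have hinj := IsFractionRing.injective D (FractionRing D)
  refine hprim.irreducible_of_irreducible_map_of_injective hinj ?_
  rw [Polynomial.map_add, Polynomial.map_mul, map_C, map_C, map_X]
  exact irreducible_of_degree_eq_one (degree_linear ((map_ne_zero_iff _ hinj).mpr ha.ne_zero))

namespace MvPolynomial

variable {σ R : Type*} [CommRing R] (s : Set σ)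

local notation "κ" => killCompl (R := R) (Subtype.val_injective (p := (· ∈ sᶜ)))

theorem killCompl_X_of_mem {i : σ} (hi : i ∈ s) : κ (X i) = 0 := by
  rw [killCompl, aeval_X, dif_neg (by simpa using hi)]

theorem sub_rename_killCompl_mem_span_X_image (p : MvPolynomial σ R) :
    p - rename (↑) (κ p) ∈ Ideal.span (X '' s) := by
  induction p using MvPolynomial.induction_on with
  | C a => simp
  | add p q hp hq =>
    rw [map_add, map_add, add_sub_add_comm]
    exact add_mem hp hq
  | mul_X p i hp =>
    rw [map_mul, map_mul]
    by_cases hi : i ∈ s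
    · rw [killCompl_X_of_mem s hi, map_zero, mul_zero, sub_zero]
      exact Ideal.mul_mem_left _ _ (Ideal.subset_span ⟨i, hi, rfl⟩)
    · have hX : (X i : MvPolynomial σ R) =
          rename ((↑) : ↥sᶜ → σ) (X ⟨i, Set.mem_compl hi⟩) := by
        rw [rename_X]
      rw [hX, killCompl_rename_app, ← hX, ← sub_mul]
      exact Ideal.mul_mem_right _ _ hp

theorem ker_killCompl : RingHom.ker κ = Ideal.span (X '' s) := by
  refine le_antisymm (fun p hp => ?_) (Ideal.span_le.mpr ?_)
  · simpa [(RingHom.mem_ker).mp hp] using sub_rename_killCompl_mem_span_X_image s p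
  · rintro _ ⟨i, hi, rfl⟩
    exact killCompl_X_of_mem s hi

theorem isPrime_span_X_image_union_singleton {f : MvPolynomial σ R}
    (hfs : f ∈ supported R sᶜ) (hf : Prime f) : (Ideal.span (X '' s ∪ {f})).IsPrime := by
  rw [supported_eq_range_rename] at hfs
  obtain ⟨g, rfl⟩ := (AlgHom.mem_range _).mp hfs
  have hsurj : Function.Surjective κ := fun p => ⟨rename (↑) p, by simp⟩
  rw [Ideal.span_union_singleton_eq_comap hsurj (ker_killCompl s), killCompl_rename_app]
  rw [prime_rename_iff] at hf
  exact ((Ideal.span_singleton_prime hf.ne_zero).mpr hf).comap _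

variable [IsDomain R] [UniqueFactorizationMonoid R]

theorem prime_mul_X_add {a c : MvPolynomial σ R} {b : σ} (ha : Prime a) (hac : ¬ a ∣ c)
    (has : a ∈ supported R {b}ᶜ) (hcs : c ∈ supported R {b}ᶜ) : Prime (a * X b + c) := by
  classical
  rw [supported_eq_range_rename] at has hcs
  obtain ⟨a, rfl⟩ := (AlgHom.mem_range _).mp has
  obtain ⟨c, rfl⟩ := (AlgHom.mem_range _).mp hcs
  let e : Polynomial (MvPolynomial ↥({b}ᶜ : Set σ) R) ≃ₐ[R] MvPolynomial σ R :=
    (optionEquivLeft R _).symm.trans (renameEquiv R (Equiv.optionSubtypeNe b))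
  have he : ∀ p, e (Polynomial.C p) = rename (↑) p := by
    intro p
    induction p using MvPolynomial.induction_on with
    | C r =>
      rw [AlgEquiv.trans_apply, optionEquivLeft_symm_C_C, rename_C]
      exact rename_C _ _
    | add p q hp hq => rw [Polynomial.C_add, map_add, hp, hq, map_add]
    | mul_X p i hp =>
      rw [Polynomial.C_mul, map_mul, hp, map_mul, rename_X, AlgEquiv.trans_apply,
        optionEquivLeft_symm_C_X]
      exact congrArg _ (rename_X _ _)
  have hX : e Polynomial.X = X b := by
    rw [AlgEquiv.trans_apply, optionEquivLeft_symm_X]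
    exact rename_X _ _
  have hprime := Polynomial.prime_C_mul_X_add_C ((prime_rename_iff _).mp ha)
    (fun h => hac (map_dvd (rename _) h))
  rw [← MulEquiv.prime_iff e, map_add, map_mul, he, he, hX] at hprime
  exact hprime

end MvPolynomial

def level13 : Set Idx8 := {I | Odd (I.val ∩ {0, 1, 2, 3}).card}

def level2 : Set Idx8 := {I | (I.val ∩ {0, 1, 2, 3}).card = 2}

theorem level2_subset_compl_level13 : level2 ⊆ level13ᶜ := by
  intro I (hI : _ = 2)
  simp [level13, hI]

theorem v8_mem_supported_level2 {A B : Finset (Fin 8)} (h : ((A ∪ B) ∩ {0, 1, 2, 3}).card = 2) :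
    v8 A B ∈ supported ℂ level2 := by
  unfold v8
  split_ifs
  · exact (X_mem_supported (R := ℂ)).mpr h
  · exact zero_mem _

set_option maxRecDepth 10000 in
theorem P5678_mem_supported_level2 : P5678 ∈ supported ℂ level2 := by
  have hlevel : ∀ I ∈ ({4, 5, 6, 7} : Finset (Fin 8)).powersetCard 2,
      ∀ A ∈ ({{0, 1}, {2, 3}, {0, 2}, {1, 3}, {0, 3}, {1, 2}} : Finset (Finset (Fin 8))),
        ((A ∪ I) ∩ {0, 1, 2, 3}).card = 2 ∧
          ((A ∪ ({4, 5, 6, 7} \ I)) ∩ {0, 1, 2, 3}).card = 2 := by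
    decide
  refine Subalgebra.sum_mem _ fun I hI => Subalgebra.mul_mem _ (Subalgebra.intCast_mem _ _) ?_
  have hv A hA := (hlevel I hI A hA).imp v8_mem_supported_level2 v8_mem_supported_level2
  exact add_mem (sub_mem (mul_mem (hv {0, 1} (by simp)).1 (hv {2, 3} (by simp)).2)
    (mul_mem (hv {0, 2} (by simp)).1 (hv {1, 3} (by simp)).2))
    (mul_mem (hv {0, 3} (by simp)).1 (hv {1, 2} (by simp)).2)

-- Only the term `ψ_{12,56} ψ_{34,78}` of `P_{5678}` survives at this point.
def nonvanishingPoint (I : Idx8) : ℂ :=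
  if I.val = {0, 1, 4, 5} ∨ I.val = {2, 3, 6, 7} then 1 else 0

theorem eval_nonvanishingPoint_P5678 : eval nonvanishingPoint P5678 = 1 := by
  have hpairs : ({4, 5, 6, 7} : Finset (Fin 8)).powersetCard 2
      = {{4, 5}, {4, 6}, {4, 7}, {5, 6}, {5, 7}, {6, 7}} := by decide
  rw [P5678, hpairs]
  simp +decide [Finset.sum_insert, v8, shuffleSign8, nonvanishingPoint]

theorem not_X_dvd_P5678 : ¬ X (⟨{0, 1, 2, 3}, by decide⟩ : Idx8) ∣ P5678 := by
  rintro ⟨q, hq⟩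
  have h := congrArg (eval nonvanishingPoint) hq
  rw [eval_nonvanishingPoint_P5678, eval_mul, eval_X, nonvanishingPoint, if_neg (by decide),
    zero_mul] at h
  exact one_ne_zero h

theorem prime_Q5678 : Prime Q5678 := by
  have hlevel2 : level2 ⊆ {⟨{4, 5, 6, 7}, by decide⟩}ᶜ := by
    rintro I (hI : (I.val ∩ _).card = 2) rfl
    exact absurd hI (by decide)
  refine prime_mul_X_add X_prime.neg (by rw [neg_dvd]; exact not_X_dvd_P5678) ?_
    (supported_mono hlevel2 P5678_mem_supported_level2)
  exact neg_mem ((X_mem_supported (R := ℂ)).mpr (by decide))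

theorem Q5678_mem_supported_compl_level13 : Q5678 ∈ supported ℂ level13ᶜ := by
  refine add_mem (mul_mem (neg_mem ?_) ?_)
    (supported_mono level2_subset_compl_level13 P5678_mem_supported_level2) <;>
  exact (X_mem_supported (R := ℂ)).mpr (show ¬ Odd _ by decide)

/-- For `n = 8`, the ideal of `R = ℂ[ψ_I]` generated by the level-1 and
level-3 variables (those `ψ_I` with `|I ∩ {1,2,3,4}|` odd) together with the quadric
`Q_{5678}` is prime. -/
theorem span_level13_and_Q5678_isPrime :
    (Ideal.span
      ((Set.range fun I : {I : Idx8 // Odd ((I.val ∩ ({0, 1, 2, 3} : Finset (Fin 8))).card)} =>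
          (X I.val : MvPolynomial Idx8 ℂ)) ∪ {Q5678})).IsPrime := by
  have h := isPrime_span_X_image_union_singleton level13 Q5678_mem_supported_compl_level13
    prime_Q5678
  rw [Set.image_eq_range] at h
  exact h
end
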